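/- arXiv:2506.17862 — 2 statements merged into one kernel-verified Lean document; each statement's English description precedes it below -/
import Mathlib

section
/- For all integers a ≥ 1 and n ≥ 1, the alternating sum ∑_{k=0}^{n} (−1)^k · C(n,k) · C(an+1+k, (a−1)n+1+k)/(an+1+k) equals 0 (as a rational number). -/
/-!
By symmetry and `C(N+1, n)/(N+1) = C(N, n-1)/n` with `N = an + k`, the `k`-th term is
`(-1)^k C(n,k) C(an+k, n-1) / n`. Up to the sign `(-1)^n`, the sum is then the `n`-th forward
difference at `an` of `x ↦ C(x, n-1)`, a polynomial of degree `n - 1`, so it vanishes.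
-/

open Finset Function fwdDiff

theorem fwdDiff_iter_choose_eq_zero {r n : ℕ} (h : r < n) :
    (Δ_[1])^[n] (fun x ↦ x.choose r : ℕ → ℤ) = 0 := by
  obtain ⟨d, rfl⟩ : ∃ d, n = d + 1 + r := ⟨n - (r + 1), by omega⟩
  have hconst : (Δ_[1])^[r] (fun x ↦ x.choose r : ℕ → ℤ) = fun _ ↦ 1 := by
    simpa using fwdDiff_iter_choose 0 r
  rw [iterate_add_apply, hconst, iterate_succ_apply, fwdDiff_const]
  exact iterate_fixed (fwdDiff_const 1 0) d

theorem alternating_sum_choose_mul_choose_add {R : Type*} [Ring R] {r n : ℕ} (h : r < n)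
    (m : ℕ) :
    ∑ k ∈ range (n + 1), (-1 : R) ^ k * n.choose k * (m + k).choose r = 0 := by
  have hΔ := congr_fun (fwdDiff_iter_choose_eq_zero h) m
  rw [fwdDiff_iter_eq_sum_shift] at hΔ
  have hsign : ∀ k ∈ range (n + 1), (-1 : ℤ) ^ k = (-1) ^ n * (-1) ^ (n - k) := by
    intro k hk
    obtain ⟨j, rfl⟩ := Nat.exists_eq_add_of_le (Nat.le_of_lt_succ (mem_range.1 hk))
    rw [Nat.add_sub_cancel_left, pow_add, mul_assoc, ← pow_add, Even.neg_one_pow ⟨j, rfl⟩, mul_one]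
  have hℤ : ∑ k ∈ range (n + 1), (-1 : ℤ) ^ k * n.choose k * (m + k).choose r = 0 := by
    rw [sum_congr rfl fun k hk ↦ by rw [hsign k hk]]
    simpa [mul_assoc, ← mul_sum] using hΔ
  exact_mod_cast congrArg (Int.cast : ℤ → R) hℤ

theorem Nat.cast_choose_add_one_div {K : Type*} [Field K] [CharZero K] (N j : ℕ) :
    ((N + 1).choose (j + 1) : K) / (N + 1) = N.choose j / (j + 1) := by
  rw [div_eq_div_iff (Nat.cast_add_one_ne_zero N) (Nat.cast_add_one_ne_zero j),
    mul_comm _ (N + 1 : K)]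
  exact_mod_cast (Nat.add_one_mul_choose_eq N j).symm

/-- For integers `a ≥ 1` and `n ≥ 1`, the alternating sum
`∑_{k=0}^{n} (−1)^k · C(n,k) · C(an+1+k, (a−1)n+1+k)/(an+1+k)` equals `0` in `ℚ`. -/
theorem stmt_6 (a n : ℕ) (ha : 1 ≤ a) (hn : 1 ≤ n) :
    ∑ k ∈ Finset.range (n + 1),
      (-1 : ℚ) ^ k * (n.choose k : ℚ) *
        ((a * n + 1 + k).choose ((a - 1) * n + 1 + k) : ℚ) / (a * n + 1 + k) = 0 := by
  obtain ⟨m, rfl⟩ : ∃ m, n = m + 1 := ⟨n - 1, by omega⟩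
  have hterm : ∀ k : ℕ, ((a * (m + 1) + 1 + k).choose ((a - 1) * (m + 1) + 1 + k) : ℚ)
      / (a * (m + 1 : ℕ) + 1 + k) = (a * (m + 1) + k).choose m / (m + 1) := by
    intro k
    have hsplit : a * (m + 1) + k + 1 = (m + 1) + ((a - 1) * (m + 1) + 1 + k) := by
      obtain ⟨b, rfl⟩ : ∃ b, a = b + 1 := ⟨a - 1, by omega⟩
      simp only [Nat.add_sub_cancel]
      ring
    rw [show a * (m + 1) + 1 + k = a * (m + 1) + k + 1 by ring, ← Nat.choose_symm_of_eq_add hsplit]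
    convert Nat.cast_choose_add_one_div (K := ℚ) (a * (m + 1) + k) m using 2
    push_cast
    ring
  simp_rw [mul_div_assoc, hterm, ← mul_div_assoc, ← sum_div,
    alternating_sum_choose_mul_choose_add (lt_add_one m), zero_div]
end

section
/- For all integers a ≥ 1, n ≥ 1 and 0 ≤ i ≤ n−1, the partial alternating sum ∑_{j=0}^{i} (−1)^{i−j} · C(n,j) · C(an+1+j, (a−1)n+1+j)/(an+1+j) equals (1/(an+1)) · C(n−1, i) · C(an+1+i, (a−1)n+1+i). -/
/-!
With `m = a n + 1`, the binomial coefficient in the summand is `C(m + j, n)`, because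
`(a - 1) n + 1 + j` and `n` add up to `m + j`. Put `q i = C(n - 1, i) C(m + i, n) / m` and let
`t j` be the `j`-th summand without its sign. Then `q 0 = t 0` and `q (i + 1) + q i = t (i + 1)`,
by Pascal's rule for `C(n, i + 1)` and the absorption identities
`(i + 1) C(n - 1, i + 1) = (n - 1 - i) C(n - 1, i)` and
`(m + i + 1 - n) C(m + i + 1, n) = (m + i + 1) C(m + i, n)`;
such a recurrence makes the alternating partial sums of `t` telescope to `q i`.
-/

open Finset

section Ring

variable {R : Type*} [Ring R]

theorem Nat.cast_choose_succ_right_mul (n k : ℕ) :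
    (n.choose (k + 1) : R) * (k + 1) = n.choose k * ((n : R) - k) := by
  rcases le_or_gt k n with hk | hk
  · exact_mod_cast congrArg (Nat.cast : ℕ → R) (Nat.choose_succ_right_eq n k)
  · simp [Nat.choose_eq_zero_of_lt hk, Nat.choose_eq_zero_of_lt (hk.trans k.lt_succ_self)]

theorem Nat.cast_choose_mul_succ (n k : ℕ) :
    (n.choose k : R) * (n + 1) = (n + 1).choose k * ((n : R) + 1 - k) := by
  rcases le_or_gt k (n + 1) with hk | hk
  · exact_mod_cast congrArg (Nat.cast : ℕ → R) (Nat.choose_mul_succ_eq n k)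
  · simp [Nat.choose_eq_zero_of_lt hk, Nat.choose_eq_zero_of_lt ((n.lt_succ_self).trans hk)]

theorem sum_range_neg_one_pow_mul_eq_of_add {f t : ℕ → R} (h₀ : t 0 = f 0)
    (h : ∀ i, t (i + 1) = f (i + 1) + f i) (i : ℕ) :
    ∑ j ∈ range (i + 1), (-1 : R) ^ (i - j) * t j = f i := by
  induction i with
  | zero => simp [h₀]
  | succ i ih =>
    have hshift : ∑ j ∈ range (i + 1), (-1 : R) ^ (i + 1 - j) * t j
        = -∑ j ∈ range (i + 1), (-1 : R) ^ (i - j) * t j := by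
      rw [← sum_neg_distrib]
      refine sum_congr rfl fun j hj => ?_
      rw [Nat.sub_add_comm (mem_range_succ_iff.mp hj), pow_succ]
      noncomm_ring
    rw [sum_range_succ, hshift, ih, h, Nat.sub_self, pow_zero, one_mul]
    abel

end Ring

theorem choose_div_add_choose_div_eq {K : Type*} [Field K] [CharZero K] {m : ℕ} (hm : m ≠ 0)
    (k i : ℕ) :
    (k.choose (i + 1) : K) * (m + (i + 1)).choose (k + 1) / m
        + k.choose i * (m + i).choose (k + 1) / m
      = (k + 1).choose (i + 1) * (m + (i + 1)).choose (k + 1) / (m + (i + 1) : ℕ) := by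
  have hB := Nat.cast_choose_succ_right_mul (R := K) k i
  have hK := Nat.cast_choose_mul_succ (R := K) (m + i) (k + 1)
  have hm' : (m : K) + i + 1 ≠ 0 := by exact_mod_cast (m + i).succ_ne_zero
  rw [Nat.choose_succ_succ', ← add_assoc m i 1]
  push_cast at hK ⊢
  field_simp
  linear_combination (k.choose i : K) * hK + ((m + i + 1).choose (k + 1) : K) * hB

theorem stmt_8_general (a n i : ℕ) (ha : 1 ≤ a) (hn : 1 ≤ n) :
    ∑ j ∈ Finset.range (i + 1),
      (-1 : ℚ) ^ (i - j) * (n.choose j : ℚ) *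
        ((a * n + 1 + j).choose ((a - 1) * n + 1 + j) : ℚ) / (a * n + 1 + j)
      = 1 / ((a : ℚ) * n + 1) * ((n - 1).choose i : ℚ) *
          ((a * n + 1 + i).choose ((a - 1) * n + 1 + i) : ℚ) := by
  have hsymm (j : ℕ) : (a * n + 1 + j).choose ((a - 1) * n + 1 + j) = (a * n + 1 + j).choose n :=
    Nat.choose_symm_of_eq_add <| by
      obtain ⟨b, rfl⟩ := Nat.exists_eq_add_of_le' ha
      simp only [Nat.add_sub_cancel]
      ring
  obtain ⟨k, rfl⟩ := Nat.exists_eq_add_of_le' hn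
  have key := sum_range_neg_one_pow_mul_eq_of_add
    (f := fun i =>
      (k.choose i : ℚ) * (a * (k + 1) + 1 + i).choose (k + 1) / (a * (k + 1) + 1 : ℕ))
    (t := fun j =>
      ((k + 1).choose j : ℚ) * (a * (k + 1) + 1 + j).choose (k + 1) / (a * (k + 1) + 1 + j : ℕ))
    (by simp) (fun i => (choose_div_add_choose_div_eq (a * (k + 1)).succ_ne_zero k i).symm) i
  simp only [hsymm, Nat.add_sub_cancel]
  push_cast at key ⊢
  convert key using 1
  · exact sum_congr rfl fun j _ => by ring
  · ring

/-- For integers `a ≥ 1`, `n ≥ 1` and `0 ≤ i ≤ n−1`, the partial alternating sum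
`∑_{j=0}^{i} (−1)^{i−j} · C(n,j) · C(an+1+j, (a−1)n+1+j)/(an+1+j)` equals
`(1/(an+1)) · C(n−1, i) · C(an+1+i, (a−1)n+1+i)`. -/
theorem stmt_8 (a n i : ℕ) (ha : 1 ≤ a) (hn : 1 ≤ n) (hi : i ≤ n - 1) :
    ∑ j ∈ Finset.range (i + 1),
      (-1 : ℚ) ^ (i - j) * (n.choose j : ℚ) *
        ((a * n + 1 + j).choose ((a - 1) * n + 1 + j) : ℚ) / (a * n + 1 + j)
      = 1 / ((a : ℚ) * n + 1) * ((n - 1).choose i : ℚ) *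
          ((a * n + 1 + i).choose ((a - 1) * n + 1 + i) : ℚ) :=
  stmt_8_general a n i ha hn
end
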